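/- arXiv:2002.10654 — 2 statements merged into one kernel-verified Lean document; each statement's English description precedes it below -/
import Mathlib

section
/- There is a universal constant C > 0 such that for every partial boolean function f : {0,1}^n → {0,1,*}, every balanced input distribution D = ½D0 + ½D1 for f, every ε ∈ (0,1/2), and every δ ∈ (0,1/2]: corr_ε(f,D) ≤ C · (log(1/ε)/δ²) · corr_{1/2−δ}(f,D). -/
open Finset

/-- A deterministic decision tree over alphabet `α`, querying positions `ι`,
with output labels `β`.  A `node i ch` queries position `i` and has one child per symbol. -/
inductive DTree (α ι β : Type) : Type where
  | leaf : β → DTree α ι β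
  | node : ι → (α → DTree α ι β) → DTree α ι β

namespace DTree

/-- The output of the tree on input `x`. -/
def eval {α ι β : Type} : DTree α ι β → (ι → α) → β
  | .leaf b, _ => b
  | .node i ch, x => (ch (x i)).eval x

/-- The depth of a tree: the maximum number of queries along any root-to-leaf path. -/
def depth {α ι β : Type} [Fintype α] : DTree α ι β → ℕ
  | .leaf _ => 0
  | .node _ ch => 1 + Finset.univ.sup fun a => (ch a).depth

/-- `Input(ℓ)` for the leaf `ℓ` reached by `x`: the set of inputs that follow
the same root-to-leaf path as `x`. -/
def reach {α ι β : Type} : DTree α ι β → (ι → α) → Set (ι → α)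
  | .leaf _, _ => Set.univ
  | .node i ch, x => {y | y i = x i} ∩ (ch (x i)).reach x

/-- For a tree on `k` samples, the set `ℓ_j ⊆ Σ^n` of strings consistent with the
queries made to the `j`-th sample on the path followed by input `x`. -/
def reachJ {α β : Type} {k n : ℕ} :
    DTree α (Fin k × Fin n) β → ((Fin k × Fin n) → α) → Fin k → Set (Fin n → α)
  | .leaf _, _, _ => Set.univ
  | .node p ch, x, j =>
      (if p.1 = j then {y : Fin n → α | y p.2 = x p} else Set.univ) ∩ (ch (x p)).reachJ x j

end DTree

/-- Probability mass of a set `S` under (the mass function of) a distribution `D`. -/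
noncomputable def prS {γ : Type} [Fintype γ] (D : γ → ℝ) (S : Set γ) : ℝ :=
  ∑ x, S.indicator D x

/-- `D` is a probability mass function on the finite type `γ`. -/
def IsDist {γ : Type} [Fintype γ] (D : γ → ℝ) : Prop :=
  (∀ x, 0 ≤ D x) ∧ ∑ x, D x = 1

/-- Likelihood ratio `LR(S) = D1(S)/D0(S)`. -/
noncomputable def LR {γ : Type} [Fintype γ] (D0 D1 : γ → ℝ) (S : Set γ) : ℝ :=
  prS D1 S / prS D0 S

/-- The `k`-fold product distribution `D^k` on `k` samples (input flattened). -/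
noncomputable def prodD {α : Type} {n k : ℕ} (D : (Fin n → α) → ℝ) :
    ((Fin k × Fin n) → α) → ℝ :=
  fun x => ∏ j, D fun i => x (j, i)

/-- `T` is a `(δ, M)`-likelihood booster for `D0, D1`. -/
def LBooster {α β : Type} [Fintype α] {n : ℕ}
    (D0 D1 : (Fin n → α) → ℝ) (δ M : ℝ) (T : DTree α (Fin n) β) : Prop :=
  1 - δ ≤ prS D1 {x | M ≤ LR D0 D1 (T.reach x)}

/-- `T` is a `(δ, M)`-overall likelihood booster for `D0^k, D1^k`. -/
def OBooster {α β : Type} [Fintype α] {n k : ℕ}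
    (D0 D1 : (Fin n → α) → ℝ) (δ M : ℝ) (T : DTree α (Fin k × Fin n) β) : Prop :=
  1 - δ ≤ prS (prodD D1) {x | M ≤ ∏ j, LR D0 D1 (T.reachJ x j)}

open scoped Classical in
/-- `T` is a `(δ, ε, M)`-uniform likelihood booster for `D0^k, D1^k`. -/
def UBooster {α β : Type} [Fintype α] {n k : ℕ}
    (D0 D1 : (Fin n → α) → ℝ) (δ ε M : ℝ) (T : DTree α (Fin k × Fin n) β) : Prop :=
  1 - δ ≤ prS (prodD D1)
    {x | (1 - ε) * k ≤ ((Finset.univ.filter fun j => M ≤ LR D0 D1 (T.reachJ x j)).card : ℝ)}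

/-- `D = ½D0 + ½D1` is a balanced input distribution for the partial function `f`:
`D_b` is a distribution supported on `f⁻¹(b)`. -/
def BalancedDist {n : ℕ} (f : (Fin n → Bool) → Option Bool) (D0 D1 : (Fin n → Bool) → ℝ) : Prop :=
  IsDist D0 ∧ IsDist D1 ∧ (∀ x, D0 x ≠ 0 → f x = some false) ∧ ∀ x, D1 x ≠ 0 → f x = some true

/-- `corr_ε(f, D)`: the minimum over `k ≥ 1` of the least depth of a deterministic decision
tree on `k` samples which, for a uniformly random `b`, on input drawn from `D_b^k`
outputs `b` with probability at least `1 - ε`. -/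
noncomputable def corrC {n : ℕ} (ε : ℝ) (D0 D1 : (Fin n → Bool) → ℝ) : ℕ :=
  sInf {q | ∃ k, 0 < k ∧ ∃ T : DTree Bool (Fin k × Fin n) Bool, T.depth ≤ q ∧
    1 - ε ≤ (prS (prodD D0) {x | T.eval x = false} + prS (prodD D1) {x | T.eval x = true}) / 2}

/-- `sel_ε(f, D)`: the minimum over `k ≥ 1` of the least depth of a deterministic decision
tree on `k` samples from `D` outputting a pair `(i, f(xⁱ))` with probability at least `1 - ε`. -/
noncomputable def selC {n : ℕ} (ε : ℝ) (f : (Fin n → Bool) → Option Bool)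
    (D : (Fin n → Bool) → ℝ) : ℕ :=
  sInf {q | ∃ k, 0 < k ∧ ∃ T : DTree Bool (Fin k × Fin n) (Fin k × Bool), T.depth ≤ q ∧
    1 - ε ≤ prS (prodD D) {x | f (fun i => x ((T.eval x).1, i)) = some (T.eval x).2}}

/-- The product distribution `D_{ab}^k = (Da × Db)^k` on `k` pairs of samples. -/
noncomputable def prodD2 {n k : ℕ} (Da Db : (Fin n → Bool) → ℝ) :
    ((Fin k × Fin 2 × Fin n) → Bool) → ℝ :=
  fun x => ∏ j, (Da fun i => x (j, 0, i)) * Db fun i => x (j, 1, i)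

/-- `bicorr_ε(f, D)`: minimum over `k ≥ 1` of the least depth of a deterministic decision tree
that distinguishes `D_{01}^k` (output `false`) from `D_{10}^k` (output `true`) with
probability at least `1 - ε` for a uniformly random choice between the two. -/
noncomputable def bicorrC {n : ℕ} (ε : ℝ) (D0 D1 : (Fin n → Bool) → ℝ) : ℕ :=
  sInf {q | ∃ k, 0 < k ∧ ∃ T : DTree Bool (Fin k × Fin 2 × Fin n) Bool, T.depth ≤ q ∧
    1 - ε ≤ (prS (prodD2 D0 D1) {x | T.eval x = false} +
             prS (prodD2 D1 D0) {x | T.eval x = true}) / 2}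

/-- `R_ε(f)`: randomized query complexity, i.e. the least `q` such that some probability
distribution over deterministic decision trees of depth at most `q` outputs `f x`
with probability at least `1 - ε` for every `x` in the domain of `f`. -/
noncomputable def Rq {ι : Type} (ε : ℝ) (f : (ι → Bool) → Option Bool) : ℕ :=
  sInf {q | ∃ (p : ℕ → ℝ) (Ts : ℕ → DTree Bool ι Bool),
    (∀ i, 0 ≤ p i) ∧ (∑' i, p i) = 1 ∧ (∀ i, (Ts i).depth ≤ q) ∧
    ∀ x b, f x = some b → 1 - ε ≤ ∑' i, if (Ts i).eval x = b then p i else 0}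

/-- `corr_ε(f)`: the maximum of `corr_ε(f, D)` over balanced input distributions `D` for `f`. -/
noncomputable def corrMax {n : ℕ} (ε : ℝ) (f : (Fin n → Bool) → Option Bool) : ℕ :=
  sSup {q | ∃ D0 D1, BalancedDist f D0 D1 ∧ q = corrC ε D0 D1}

/-- `sel_ε(f)`: the maximum of `sel_ε(f, D)` over balanced input distributions `D` for `f`. -/
noncomputable def selMax {n : ℕ} (ε : ℝ) (f : (Fin n → Bool) → Option Bool) : ℕ :=
  sSup {q | ∃ D0 D1, BalancedDist f D0 D1 ∧ q = selC ε f fun x => (D0 x + D1 x) / 2}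
/-- The parity (XOR) of all bits of `x`. -/
def XORn {n : ℕ} (x : Fin n → Bool) : Bool :=
  decide ((Finset.univ.filter fun i => x i = true).card % 2 = 1)

/-- The parity of the bits of `x` in positions `≥ 2`. -/
def XORtail {n : ℕ} (x : Fin n → Bool) : Bool :=
  decide ((Finset.univ.filter fun i : Fin n => 2 ≤ (i : ℕ) ∧ x i = true).card % 2 = 1)

/-- `x` with the bits in block `B` flipped. -/
def flipB {n : ℕ} (x : Fin n → Bool) (B : Finset (Fin n)) : Fin n → Bool :=
  fun i => if i ∈ B then !(x i) else x i

/-- `B` is a sensitive block of `f` on `x`: `x^B` lies in the domain of `f` and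
`f(x^B) ≠ f(x)`. -/
def SensBlock {n : ℕ} (f : (Fin n → Bool) → Option Bool) (x : Fin n → Bool)
    (B : Finset (Fin n)) : Prop :=
  (f (flipB x B)).isSome ∧ f (flipB x B) ≠ f x

/-- Fractional block sensitivity `fbs(f) = max_x fbs(f, x)`, where `fbs(f,x)` is the value
of the fractional packing LP over the sensitive blocks of `x`. -/
noncomputable def fbs {n : ℕ} (f : (Fin n → Bool) → Option Bool) : ℝ :=
  sSup {r | ∃ x, (f x).isSome ∧ ∃ w : Finset (Fin n) → ℝ,
    (∀ B, 0 ≤ w B) ∧ (∀ B, w B ≤ 1) ∧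
    (∀ B, w B ≠ 0 → SensBlock f x B) ∧
    (∀ i, ∑ B ∈ Finset.univ.filter (fun B => i ∈ B), w B ≤ 1) ∧
    r = ∑ B, w B}

/-- The composed partial function `f ∘ g`, defined on `(x¹, …, xⁿ)` when every `xⁱ` is in
the domain of `g`, with value `f(g(x¹), …, g(xⁿ))`. -/
def compFG {n m : ℕ} (f : (Fin n → Bool) → Option Bool) (g : (Fin m → Bool) → Option Bool) :
    ((Fin n × Fin m) → Bool) → Option Bool :=
  fun x =>
    if h : ∀ i, (g fun s => x (i, s)).isSome then
      f fun i => (g fun s => x (i, s)).get (h i)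
    else none

/-- Number of queries that `T` makes into block `B` on input `x` (each query reads one bit
`(i, s)`, and counts if `i ∈ B`). -/
def countQ {m n : ℕ} {β : Type} (B : Finset (Fin n)) :
    DTree Bool (Fin n × Fin m) β → ((Fin n × Fin m) → Bool) → ℕ
  | .leaf _, _ => 0
  | .node p ch, x => (if p.1 ∈ B then 1 else 0) + countQ B (ch (x p)) x

/-- The Shaltiel distribution for `XOR_n`, `n = m + 2`: with probability 99/100 output `0`
followed by `n-1` uniform bits; with probability 1/100 output `1`, one uniform bit, `0^{n-2}`. -/
noncomputable def D16 (m : ℕ) : (Fin (m + 2) → Bool) → ℝ := fun x =>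
  (if x 0 = false then (99 / 100) * ((1:ℝ) / 2) ^ (m + 1) else 0) +
  (if x 0 = true ∧ (∀ i : Fin (m + 2), 2 ≤ (i : ℕ) → x i = false) then 1 / 200 else 0)

/-- The distribution of Theorem 2 for `XOR_n`, `n = m + 3`: sample `z` uniform on `n-2` bits,
`a := XOR(z)`, `b` uniform; output `a a z` w.p. 1/100 and `b b z` w.p. 99/100. -/
noncomputable def D34 (m : ℕ) : (Fin (m + 3) → Bool) → ℝ := fun x =>
  if x 0 = x 1 then
    ((1:ℝ) / 2) ^ (m + 1) * (99 / 200 + if x 0 = XORtail x then 1 / 100 else 0)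
  else 0

/-- A distribution conditioned on `XORn x = b` (for distributions giving each value
probability 1/2). -/
noncomputable def condXOR {n : ℕ} (D : (Fin n → Bool) → ℝ) (b : Bool) : (Fin n → Bool) → ℝ :=
  fun x => if XORn x = b then 2 * D x else 0


/-!
Take a tree `T` on `k` samples of depth `corr_{1/2-δ}(f, D)` and error `1/2 - δ`: its
acceptance probabilities `p0` under `D0^k` and `p1` under `D1^k` satisfy `p1 - p0 ≥ 2δ`.
Run `T` on `m = ⌈4 log(1/ε)/δ²⌉` disjoint blocks of `k` samples and accept iff more than
`m (p0 + p1)/2` runs accept. The runs are independent, so a Chernoff bound with parameter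
`δ/2` bounds each of the two errors by `exp(-δ² m/4) ≤ ε`, while the depth is
`m · depth T ≤ 5 (log(1/ε)/δ²) · corr_{1/2-δ}(f, D)`.
-/

open Real

namespace DTree

variable {α ι ι' ρ β γ : Type}

def bind : DTree α ι β → (β → DTree α ι γ) → DTree α ι γ
  | .leaf b, f => f b
  | .node i ch, f => .node i fun a => (ch a).bind f

theorem eval_bind (t : DTree α ι β) (f : β → DTree α ι γ) (x : ι → α) :
    (t.bind f).eval x = (f (t.eval x)).eval x := by
  induction t with
  | leaf b => rfl
  | node i ch ih => exact ih (x i)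

theorem depth_bind_le [Fintype α] (t : DTree α ι β) {f : β → DTree α ι γ} {d : ℕ}
    (hf : ∀ b, (f b).depth ≤ d) : (t.bind f).depth ≤ t.depth + d := by
  induction t with
  | leaf b => simpa [bind, depth] using hf b
  | node i ch ih =>
    have hsup : (univ.sup fun a => ((ch a).bind f).depth) ≤
        (univ.sup fun a => (ch a).depth) + d :=
      Finset.sup_le fun a ha =>
        (ih a).trans (Nat.add_le_add_right (Finset.le_sup (f := fun a => (ch a).depth) ha) d)
    simp only [bind, depth]
    omega

def reindex (g : ι → ι') : DTree α ι β → DTree α ι' β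
  | .leaf b => .leaf b
  | .node i ch => .node (g i) fun a => (ch a).reindex g

theorem eval_reindex (g : ι → ι') (t : DTree α ι β) (x : ι' → α) :
    (t.reindex g).eval x = t.eval (x ∘ g) := by
  induction t with
  | leaf b => rfl
  | node i ch ih => exact ih (x (g i))

theorem depth_reindex [Fintype α] (g : ι → ι') (t : DTree α ι β) :
    (t.reindex g).depth = t.depth := by
  induction t with
  | leaf b => rfl
  | node i ch ih => simp only [reindex, depth, ih]

section ReadList

variable [DecidableEq ι]

/-- Queries the positions of `L` in turn; `σ` records the answers so far. -/
def readList (R : (ι → α) → β) : List ι → (ι → α) → DTree α ι β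
  | [], σ => .leaf (R σ)
  | i :: L, σ => .node i fun a => readList R L (Function.update σ i a)

theorem eval_readList (R : (ι → α) → β) (L : List ι) (σ x : ι → α) :
    (readList R L σ).eval x = R fun i => if i ∈ L then x i else σ i := by
  induction L generalizing σ with
  | nil => simp [readList, eval]
  | cons i L ih =>
    simp only [readList, eval, ih]
    congr 1
    funext j
    by_cases hjL : j ∈ L <;> by_cases hji : j = i <;> simp [hjL, hji]

theorem depth_readList_le [Fintype α] (R : (ι → α) → β) (L : List ι) (σ : ι → α) :
    (readList R L σ).depth ≤ L.length := by
  induction L generalizing σ with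
  | nil => simp [readList, depth]
  | cons i L ih =>
    have hsup : (univ.sup fun a => (readList R L (Function.update σ i a)).depth) ≤ L.length :=
      Finset.sup_le fun a _ => ih _
    simp only [readList, depth, List.length_cons]
    omega

noncomputable def readAll [Fintype ι] [Inhabited α] (R : (ι → α) → β) : DTree α ι β :=
  readList R univ.toList default

theorem eval_readAll [Fintype ι] [Inhabited α] (R : (ι → α) → β) (x : ι → α) :
    (readAll R).eval x = R x := by
  simp [readAll, eval_readList]

theorem depth_readAll_le [Fintype ι] [Fintype α] [Inhabited α] (R : (ι → α) → β) :
    (readAll R).depth ≤ Fintype.card ι :=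
  (depth_readList_le R _ _).trans_eq (Finset.length_toList _)

end ReadList

def countRuns (T : DTree α ι Bool) (out : ℕ → β) : List ρ → ℕ → DTree α (ρ × ι) β
  | [], c => .leaf (out c)
  | r :: L, c => (T.reindex (Prod.mk r)).bind fun b => countRuns T out L (c + b.toNat)

theorem eval_countRuns (T : DTree α ι Bool) (out : ℕ → β) (L : List ρ) (c : ℕ)
    (x : ρ × ι → α) :
    (countRuns T out L c).eval x =
      out (c + (L.map fun r => (T.eval fun i => x (r, i)).toNat).sum) := by
  induction L generalizing c with
  | nil => rfl
  | cons r L ih =>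
    rw [countRuns, eval_bind, ih, eval_reindex, List.map_cons, List.sum_cons, add_assoc]
    rfl

theorem depth_countRuns_le [Fintype α] (T : DTree α ι Bool) (out : ℕ → β) (L : List ρ)
    (c : ℕ) : (countRuns T out L c).depth ≤ L.length * T.depth := by
  induction L generalizing c with
  | nil => simp [countRuns, depth]
  | cons r L ih =>
    refine (depth_bind_le _ fun b => ih _).trans ?_
    rw [depth_reindex, List.length_cons, Nat.succ_mul]
    omega

end DTree

section Blocks

variable {α β : Type} {m k n : ℕ}

/-- Position `(j, i)` of block `r` among `m` blocks of `k` samples. -/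
def blockIdx (p : Fin m × (Fin k × Fin n)) : Fin (m * k) × Fin n :=
  (finProdFinEquiv (p.1, p.2.1), p.2.2)

def blocksEquiv : ((Fin (m * k) × Fin n) → α) ≃ (Fin m → (Fin k × Fin n) → α) :=
  (Equiv.arrowCongr ((Equiv.prodAssoc _ _ _).symm.trans
    (Equiv.prodCongr finProdFinEquiv (Equiv.refl (Fin n)))) (Equiv.refl α)).symm.trans
    (Equiv.curry _ _ _)

theorem prodD_eq_prod_blocks (D : (Fin n → α) → ℝ) (x : (Fin (m * k) × Fin n) → α) :
    prodD D x = ∏ r, prodD D (blocksEquiv x r) := by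
  rw [prodD, ← Equiv.prod_comp finProdFinEquiv, Fintype.prod_prod_type]
  rfl

def DTree.amplify (T : DTree α (Fin k × Fin n) Bool) (m : ℕ) (out : ℕ → β) :
    DTree α (Fin (m * k) × Fin n) β :=
  (T.countRuns out (List.finRange m) 0).reindex blockIdx

theorem DTree.eval_amplify (T : DTree α (Fin k × Fin n) Bool) (out : ℕ → β)
    (x : (Fin (m * k) × Fin n) → α) :
    (T.amplify m out).eval x = out (∑ r, (T.eval (blocksEquiv x r)).toNat) := by
  rw [amplify, eval_reindex, eval_countRuns, zero_add, Fin.sum_univ_def]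
  rfl

theorem DTree.depth_amplify_le [Fintype α] (T : DTree α (Fin k × Fin n) Bool) (out : ℕ → β) :
    (T.amplify m out).depth ≤ m * T.depth := by
  rw [amplify, depth_reindex]
  simpa using depth_countRuns_le T out (List.finRange m) 0

end Blocks

section Distributions

variable {γ γ' : Type} [Fintype γ] [Fintype γ']

theorem prS_setOf (D : γ → ℝ) (P : γ → Prop) [DecidablePred P] :
    prS D {x | P x} = ∑ x, if P x then D x else 0 := by
  simp only [prS, Set.indicator_apply, Set.mem_ofPred_eq]

theorem prS_comp_equiv (e : γ ≃ γ') {w : γ → ℝ} {w' : γ' → ℝ} (hw : ∀ x, w x = w' (e x))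
    (P : γ' → Prop) : prS w {x | P (e x)} = prS w' {y | P y} := by
  classical
  simp only [prS_setOf, hw]
  exact e.sum_comp fun y => if P y then w' y else 0

namespace IsDist

variable {D w : γ → ℝ}

theorem prS_nonneg (hD : IsDist D) (S : Set γ) : 0 ≤ prS D S :=
  Finset.sum_nonneg fun x _ => Set.indicator_nonneg (fun y _ => hD.1 y) x

theorem prS_le_one (hD : IsDist D) (S : Set γ) : prS D S ≤ 1 :=
  hD.2 ▸ Finset.sum_le_sum fun x _ => Set.indicator_le_self' (fun y _ => hD.1 y) x

theorem prS_false_add_prS_true (hD : IsDist D) (g : γ → Bool) :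
    prS D {x | g x = false} + prS D {x | g x = true} = 1 := by
  rw [prS, prS, ← Finset.sum_add_distrib, ← hD.2]
  refine Finset.sum_congr rfl fun x _ => ?_
  cases hgx : g x <;> simp [hgx]

theorem prS_eq_one (hD : IsDist D) {S : Set γ} (hS : ∀ x, D x ≠ 0 → x ∈ S) : prS D S = 1 := by
  rw [← hD.2, prS]
  refine Finset.sum_congr rfl fun x _ => ?_
  by_cases hx : D x = 0
  · simp [hx]
  · exact Set.indicator_of_mem (hS x hx) D

theorem pi (hw : IsDist w) (m : ℕ) : IsDist fun Y : Fin m → γ => ∏ r, w (Y r) :=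
  ⟨fun _ => Finset.prod_nonneg fun r _ => hw.1 _, by rw [← Fintype.sum_pow, hw.2, one_pow]⟩

theorem prodD {α : Type} [Fintype α] {n k : ℕ} {D : (Fin n → α) → ℝ} (hD : IsDist D) :
    IsDist (prodD (k := k) D) := by
  refine ⟨fun x => (hD.pi k).1 (Equiv.curry _ _ _ x), ?_⟩
  rw [← (hD.pi k).2, ← (Equiv.curry _ _ _).sum_comp]
  rfl

end IsDist

end Distributions

section Chernoff

variable {γ : Type} [Fintype γ] {w : γ → ℝ}

theorem exp_le_one_add_add_sq {t : ℝ} (ht : |t| ≤ 1) : exp t ≤ 1 + t + t ^ 2 := by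
  linarith [(abs_le.1 (abs_exp_sub_one_sub_id_le ht)).2]

theorem one_add_mul_exp_sub_one_le_exp {t p : ℝ} (ht : |t| ≤ 1) (hp0 : 0 ≤ p) (hp1 : p ≤ 1) :
    1 + (exp t - 1) * p ≤ exp (t * p + t ^ 2) := by
  have hexp := exp_le_one_add_add_sq ht
  calc 1 + (exp t - 1) * p ≤ 1 + (t + t ^ 2) * p := by gcongr; linarith
    _ ≤ t * p + t ^ 2 + 1 := by nlinarith [sq_nonneg t]
    _ ≤ exp (t * p + t ^ 2) := add_one_le_exp _

theorem IsDist.sum_pi_mul_exp_count (hw : IsDist w) (g : γ → Bool) (m : ℕ) (t : ℝ) :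
    ∑ Y : Fin m → γ, (∏ r, w (Y r)) * exp (t * ((∑ r, (g (Y r)).toNat : ℕ) : ℝ)) =
      (1 + (exp t - 1) * prS w {z | g z = true}) ^ m := by
  have hfactor : ∀ Y : Fin m → γ,
      (∏ r, w (Y r)) * exp (t * ((∑ r, (g (Y r)).toNat : ℕ) : ℝ)) =
        ∏ r, w (Y r) * exp (t * (g (Y r)).toNat) := by
    intro Y
    rw [Finset.prod_mul_distrib, Nat.cast_sum, Finset.mul_sum, exp_sum]
  have hsingle : ∑ z, w z * exp (t * (g z).toNat) = 1 + (exp t - 1) * prS w {z | g z = true} :=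
    calc ∑ z, w z * exp (t * (g z).toNat)
        = ∑ z, (w z + (exp t - 1) * if g z = true then w z else 0) :=
          Finset.sum_congr rfl fun z _ => by cases g z <;> simp; ring
      _ = _ := by rw [Finset.sum_add_distrib, hw.2, ← Finset.mul_sum, prS_setOf]
  simp_rw [hfactor]
  rw [← hsingle, Fintype.sum_pow]

/-- Chernoff: Markov's inequality for `exp (t * count)`; the sign of `t` selects the tail. -/
theorem IsDist.prS_pi_le_exp (hw : IsDist w) (g : γ → Bool) {m : ℕ} {t a : ℝ} (ht : |t| ≤ 1)
    {S : Set (Fin m → γ)} (hS : ∀ Y ∈ S, t * a ≤ t * ((∑ r, (g (Y r)).toNat : ℕ) : ℝ)) :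
    prS (fun Y => ∏ r, w (Y r)) S ≤
      exp (-(t * a) + (t * prS w {z | g z = true} + t ^ 2) * m) := by
  set p := prS w {z | g z = true}
  set N : (Fin m → γ) → ℝ := fun Y => ((∑ r, (g (Y r)).toNat : ℕ) : ℝ)
  have hmarkov : ∀ Y, S.indicator (fun Y => ∏ r, w (Y r)) Y ≤
      (∏ r, w (Y r)) * exp (t * N Y) * exp (-(t * a)) := by
    intro Y
    have hW : 0 ≤ ∏ r, w (Y r) := (hw.pi m).1 Y
    by_cases hY : Y ∈ S
    · rw [Set.indicator_of_mem hY, mul_assoc, ← exp_add]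
      exact le_mul_of_one_le_right hW (one_le_exp (by linarith [hS Y hY]))
    · rw [Set.indicator_of_notMem hY]
      positivity
  have hp0 : 0 ≤ p := hw.prS_nonneg _
  have hbase : 0 ≤ 1 + (exp t - 1) * p := by
    nlinarith [exp_pos t, hw.prS_le_one {z | g z = true}]
  calc prS (fun Y => ∏ r, w (Y r)) S
      ≤ ∑ Y, (∏ r, w (Y r)) * exp (t * N Y) * exp (-(t * a)) :=
        Finset.sum_le_sum fun Y _ => hmarkov Y
    _ = (1 + (exp t - 1) * p) ^ m * exp (-(t * a)) := by
        rw [← Finset.sum_mul, hw.sum_pi_mul_exp_count]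
    _ ≤ exp (t * p + t ^ 2) ^ m * exp (-(t * a)) := by
        gcongr
        exact one_add_mul_exp_sub_one_le_exp ht hp0 (hw.prS_le_one _)
    _ = exp (-(t * a) + (t * p + t ^ 2) * m) := by
        rw [← exp_nat_mul, ← exp_add]
        ring_nf

end Chernoff

section Correlated

variable {n k : ℕ} {D0 D1 : (Fin n → Bool) → ℝ}

/-- The success probability of `T` in the definition of `corrC`. -/
noncomputable def successProb (D0 D1 : (Fin n → Bool) → ℝ)
    (T : DTree Bool (Fin k × Fin n) Bool) : ℝ :=
  (prS (prodD D0) {x | T.eval x = false} + prS (prodD D1) {x | T.eval x = true}) / 2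

theorem corrC_le_depth {ε : ℝ} (hk : 0 < k) (T : DTree Bool (Fin k × Fin n) Bool)
    (hT : 1 - ε ≤ successProb D0 D1 T) : corrC ε D0 D1 ≤ T.depth :=
  Nat.sInf_le ⟨k, hk, T, le_rfl, hT⟩

theorem BalancedDist.eq_zero_of_ne_zero {f : (Fin n → Bool) → Option Bool}
    (hf : BalancedDist f D0 D1) {x : Fin n → Bool} (hx : D0 x ≠ 0) : D1 x = 0 := by
  by_contra h
  simpa using (hf.2.2.1 x hx).symm.trans (hf.2.2.2 x h)

/-- The supports of `D0` and `D1` are disjoint, so a single sample determines `b`. -/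
theorem BalancedDist.successProb_readAll {f : (Fin n → Bool) → Option Bool}
    (hf : BalancedDist f D0 D1) :
    successProb D0 D1
      (DTree.readAll fun x : Fin 1 × Fin n → Bool => decide (D1 (fun i => x (0, i)) ≠ 0)) = 1 := by
  set T := DTree.readAll fun x : Fin 1 × Fin n → Bool => decide (D1 (fun i => x (0, i)) ≠ 0)
  have hT : ∀ x, T.eval x = decide (D1 (fun i => x (0, i)) ≠ 0) := DTree.eval_readAll _
  have hprod : ∀ (D : (Fin n → Bool) → ℝ) (x : Fin 1 × Fin n → Bool),
      prodD D x = D fun i => x (0, i) := fun D x => Fin.prod_univ_one _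
  have h0 : prS (prodD D0) {x | T.eval x = false} = 1 := hf.1.prodD.prS_eq_one fun x hx => by
    simpa [hT] using hf.eq_zero_of_ne_zero (hprod D0 x ▸ hx)
  have h1 : prS (prodD D1) {x | T.eval x = true} = 1 := hf.2.1.prodD.prS_eq_one fun x hx => by
    simpa [hT] using hprod D1 x ▸ hx
  rw [successProb, h0, h1]
  norm_num

theorem BalancedDist.exists_depth_le_corrC {f : (Fin n → Bool) → Option Bool}
    (hf : BalancedDist f D0 D1) {ε : ℝ} (hε : 0 ≤ ε) :
    ∃ k, 0 < k ∧ ∃ T : DTree Bool (Fin k × Fin n) Bool,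
      T.depth ≤ corrC ε D0 D1 ∧ 1 - ε ≤ successProb D0 D1 T := by
  have hmem : corrC ε D0 D1 ∈ {q | ∃ k, 0 < k ∧ ∃ T : DTree Bool (Fin k × Fin n) Bool,
      T.depth ≤ q ∧ 1 - ε ≤ successProb D0 D1 T} :=
    Nat.sInf_mem ⟨n, 1, one_pos, _, (DTree.depth_readAll_le _).trans (by simp),
      by rw [hf.successProb_readAll]; linarith⟩
  exact hmem

theorem prS_amplify_eq (D : (Fin n → Bool) → ℝ) (T : DTree Bool (Fin k × Fin n) Bool) (m : ℕ)
    (out : ℕ → Bool) (b : Bool) :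
    prS (prodD D) {x | (T.amplify m out).eval x = b} =
      prS (fun Y => ∏ r, prodD D (Y r))
        {Y : Fin m → (Fin k × Fin n) → Bool | out (∑ r, (T.eval (Y r)).toNat) = b} := by
  simp only [DTree.eval_amplify]
  exact prS_comp_equiv blocksEquiv (w' := fun Y => ∏ r, prodD D (Y r)) (prodD_eq_prod_blocks D)
    fun Y : Fin m → (Fin k × Fin n) → Bool => out (∑ r, (T.eval (Y r)).toNat) = b

/-- Majority-type amplification: output `true` iff the number of `true` answers of `m`
independent runs of `T` exceeds the midpoint of its means under `D0` and `D1`. -/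
theorem exists_amplify_successProb_ge (hD0 : IsDist D0) (hD1 : IsDist D1)
    (T : DTree Bool (Fin k × Fin n) Bool) {δ : ℝ} (hδ : 0 ≤ δ)
    (hT : 1 / 2 + δ ≤ successProb D0 D1 T) (m : ℕ) :
    ∃ T' : DTree Bool (Fin (m * k) × Fin n) Bool, T'.depth ≤ m * T.depth ∧
      1 - exp (-(δ ^ 2 / 4 * m)) ≤ successProb D0 D1 T' := by
  set p0 := prS (prodD D0) {x | T.eval x = true}
  set p1 := prS (prodD D1) {x | T.eval x = true}
  have hgap : 2 * δ ≤ p1 - p0 := by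
    have := hD0.prodD.prS_false_add_prS_true T.eval
    rw [successProb] at hT
    linarith
  have hlam : |δ / 2| ≤ 1 := by
    rw [abs_of_nonneg (by linarith)]
    linarith [hD0.prodD.prS_nonneg {x | T.eval x = true},
      hD1.prodD.prS_le_one {x | T.eval x = true}]
  have hlam' : |-(δ / 2)| ≤ 1 := by rwa [abs_neg]
  set θ := (p0 + p1) / 2
  have hmargin : 0 ≤ δ * m * (p1 - p0 - 2 * δ) :=
    mul_nonneg (mul_nonneg hδ m.cast_nonneg) (by linarith)
  have hexp0 : -(δ / 2 * (θ * m)) + (δ / 2 * p0 + (δ / 2) ^ 2) * m ≤ -(δ ^ 2 / 4 * m) := by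
    simp only [θ]
    linarith
  have hexp1 : -(-(δ / 2) * (θ * m)) + (-(δ / 2) * p1 + (-(δ / 2)) ^ 2) * m ≤
      -(δ ^ 2 / 4 * m) := by
    simp only [θ]
    linarith
  set T' := T.amplify m fun c => decide (θ * m ≤ c)
  have herr0 : prS (prodD D0) {x | T'.eval x = true} ≤ exp (-(δ ^ 2 / 4 * m)) := by
    rw [prS_amplify_eq]
    refine (hD0.prodD.prS_pi_le_exp T.eval hlam (a := θ * m) fun Y hY => ?_).trans ?_
    · have : θ * m ≤ _ := of_decide_eq_true hY
      exact mul_le_mul_of_nonneg_left this (by linarith)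
    · exact exp_le_exp.2 hexp0
  have herr1 : prS (prodD D1) {x | T'.eval x = false} ≤ exp (-(δ ^ 2 / 4 * m)) := by
    rw [prS_amplify_eq]
    refine (hD1.prodD.prS_pi_le_exp T.eval hlam' (a := θ * m) fun Y hY => ?_).trans ?_
    · have : _ < θ * m := not_le.1 (of_decide_eq_false hY)
      exact mul_le_mul_of_nonpos_left this.le (by linarith)
    · exact exp_le_exp.2 hexp1
  refine ⟨T', T.depth_amplify_le _, ?_⟩
  have h0 := hD0.prodD.prS_false_add_prS_true T'.eval
  have h1 := hD1.prodD.prS_false_add_prS_true T'.eval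
  rw [successProb]
  linarith

end Correlated

/-- Error reduction for the correlated samples problem:
`corr_ε(f,D) ≤ C · (log(1/ε)/δ²) · corr_{1/2−δ}(f,D)`. -/
theorem corr_error_reduction :
    ∃ C : ℝ, 0 < C ∧
      ∀ (n : ℕ) (f : (Fin n → Bool) → Option Bool) (D0 D1 : (Fin n → Bool) → ℝ),
        BalancedDist f D0 D1 →
        ∀ ε δ : ℝ, 0 < ε → ε < 1/2 → 0 < δ → δ ≤ 1/2 →
          (corrC ε D0 D1 : ℝ) ≤ C * (Real.log (1/ε) / δ ^ 2) * (corrC (1/2 - δ) D0 D1 : ℝ) := by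
  refine ⟨5, by norm_num, fun n f D0 D1 hf ε δ hε hε2 hδ hδ2 => ?_⟩
  obtain ⟨k, hk, T, hTdepth, hT⟩ := hf.exists_depth_le_corrC (ε := 1 / 2 - δ) (by linarith)
  set L := log (1 / ε)
  have hL : 1 / 4 ≤ L := by
    have : log 2 ≤ L := log_le_log two_pos (by rw [le_div_iff₀ hε]; linarith)
    linarith [log_two_gt_d9]
  have hLδ : 1 ≤ L / δ ^ 2 := by
    rw [le_div_iff₀ (by positivity)]
    nlinarith
  set m := ⌈4 * (L / δ ^ 2)⌉₊
  have hm : 4 * (L / δ ^ 2) ≤ m := Nat.le_ceil _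
  obtain ⟨T', hT'depth, hT'⟩ :=
    exists_amplify_successProb_ge hf.1 hf.2.1 T hδ.le (by linarith) m
  have herr : exp (-(δ ^ 2 / 4 * m)) ≤ ε := by
    calc exp (-(δ ^ 2 / 4 * m)) ≤ exp (-L) := by
          refine exp_le_exp.2 (neg_le_neg ?_)
          rw [← mul_div_assoc, div_le_iff₀ (by positivity)] at hm
          linarith
      _ = ε := by simp only [L]; rw [one_div, log_inv, neg_neg, exp_log hε]
  have hcorr : corrC ε D0 D1 ≤ m * corrC (1 / 2 - δ) D0 D1 :=
    (corrC_le_depth (Nat.mul_pos (Nat.ceil_pos.2 (by positivity)) hk) T' (by linarith)).trans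
      (hT'depth.trans (Nat.mul_le_mul_left m hTdepth))
  calc (corrC ε D0 D1 : ℝ) ≤ m * corrC (1 / 2 - δ) D0 D1 := by exact_mod_cast hcorr
    _ ≤ 5 * (L / δ ^ 2) * corrC (1 / 2 - δ) D0 D1 := by
        gcongr
        linarith [Nat.ceil_lt_add_one (by positivity : 0 ≤ 4 * (L / δ ^ 2))]
end

section
/- For all real numbers M ≥ 0 and all real t with 0 < t ≤ e^M: t·ln t − (t − 1) ≥ (1/(M + 2)) · t · (ln t)². -/
/-!
With `s = ln t ≤ M` the inequality reads `g s ≥ 0` for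
`g s = s eˢ - eˢ + 1 - s² eˢ / (M + 2)`. Since `g' s = s eˢ (M - s) / (M + 2)`, the function `g`
decreases on `(-∞, 0]` and increases on `[0, M]`, so it is bounded below by `g 0 = 0`.
-/

open Real Set

theorem apply_zero_le_of_mul_deriv_nonneg {f f' : ℝ → ℝ} {s : ℝ}
    (hf : ∀ x, HasDerivAt f (f' x) x) (hf' : ∀ x ∈ uIcc 0 s, 0 ≤ x * f' x) : f 0 ≤ f s := by
  have hcont : Continuous f := continuous_iff_continuousAt.2 fun x => (hf x).continuousAt
  have hderiv (D : Set ℝ) : ∀ x ∈ interior D, HasDerivWithinAt f (f' x) (interior D) x :=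
    fun x _ => (hf x).hasDerivWithinAt
  rcases le_or_gt 0 s with h0 | h0
  · refine monotoneOn_of_hasDerivWithinAt_nonneg (convex_Icc 0 s) hcont.continuousOn
      (hderiv _) (fun x hx => ?_) (left_mem_Icc.2 h0) (right_mem_Icc.2 h0) h0
    rw [interior_Icc] at hx
    exact nonneg_of_mul_nonneg_right (hf' x (Icc_subset_uIcc (Ioo_subset_Icc_self hx))) hx.1
  · refine antitoneOn_of_hasDerivWithinAt_nonpos (convex_Icc s 0) hcont.continuousOn
      (hderiv _) (fun x hx => ?_) (left_mem_Icc.2 h0.le) (right_mem_Icc.2 h0.le) h0.le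
    rw [interior_Icc] at hx
    exact nonpos_of_mul_nonneg_right (hf' x (Icc_subset_uIcc' (Ioo_subset_Icc_self hx))) hx.2

theorem hasDerivAt_mul_exp_sub_exp_sub_sq_mul_exp (c s : ℝ) :
    HasDerivAt (fun s => s * exp s - exp s + 1 - c * (s ^ 2 * exp s))
      (s * exp s * (1 - c * (s + 2))) s := by
  have hsq : HasDerivAt (fun s => s ^ 2 * exp s) (2 * s * exp s + s ^ 2 * exp s) s := by
    simpa using (hasDerivAt_pow 2 s).fun_mul (hasDerivAt_exp s)
  refine (((((hasDerivAt_id' s).fun_mul (hasDerivAt_exp s)).fun_sub (hasDerivAt_exp s)).add_const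
    1).fun_sub (hsq.const_mul c)).congr_deriv ?_
  ring

/-- For all `M ≥ 0` and `0 < t ≤ e^M`:
`t·ln t − (t − 1) ≥ (1/(M+2)) · t · (ln t)²`. -/
theorem helper_inequality (M t : ℝ) (hM : 0 ≤ M) (ht0 : 0 < t) (ht : t ≤ Real.exp M) :
    (1 / (M + 2)) * (t * Real.log t ^ 2) ≤ t * Real.log t - (t - 1) := by
  have hsM : log t ≤ M := (log_le_iff_le_exp ht0).2 ht
  have hmin := apply_zero_le_of_mul_deriv_nonneg (s := log t)
    (hasDerivAt_mul_exp_sub_exp_sub_sq_mul_exp (1 / (M + 2))) (fun x hx => ?_)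
  · simp only [exp_zero, exp_log ht0] at hmin
    linarith
  have hxM : x ≤ M := (mem_uIcc.1 hx).elim (fun h => h.2.trans hsM) fun h => h.2.trans hM
  have hc : 0 ≤ 1 - 1 / (M + 2) * (x + 2) := by
    rw [sub_nonneg, one_div_mul_eq_div, div_le_one (by linarith)]
    linarith
  calc 0 ≤ x ^ 2 * exp x * (1 - 1 / (M + 2) * (x + 2)) := by positivity
    _ = x * (x * exp x * (1 - 1 / (M + 2) * (x + 2))) := by ring
end
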